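/- Let S₀ ⊆ ℝ² be nonempty and compact with connected complement ℝ² ∖ S₀, and let Ω_c ⊆ ℝ² satisfy interior(Ω_c) ∖ S₀ ≠ ∅. For (h, ϑ) ∈ ℝ² × ℝ write h + R(ϑ)S₀ := {h + R(ϑ)x : x ∈ S₀}. Then the set 𝒬 := {(h, ϑ) ∈ ℝ² × ℝ : interior(Ω_c) ∖ ((h + R(ϑ)S₀) ∪ S₀) ≠ ∅} is nonempty and path-connected. -/

import Mathlib

/-- The rotation of the plane by angle `θ`:
`R(θ) x = (cos θ · x₀ − sin θ · x₁, sin θ · x₀ + cos θ · x₁)`. -/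
noncomputable def rot (θ : ℝ) (x : EuclideanSpace ℝ (Fin 2)) : EuclideanSpace ℝ (Fin 2) :=
  WithLp.toLp 2 ![Real.cos θ * x 0 - Real.sin θ * x 1, Real.sin θ * x 0 + Real.cos θ * x 1]

lemma rot_apply_zero (θ : ℝ) (x : EuclideanSpace ℝ (Fin 2)) :
    rot θ x 0 = Real.cos θ * x 0 - Real.sin θ * x 1 := rfl

lemma rot_apply_one (θ : ℝ) (x : EuclideanSpace ℝ (Fin 2)) :
    rot θ x 1 = Real.sin θ * x 0 + Real.cos θ * x 1 := rfl

lemma rot_rot_neg (θ : ℝ) (v : EuclideanSpace ℝ (Fin 2)) : rot θ (rot (-θ) v) = v := by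
  ext i
  fin_cases i
  · show rot θ (rot (-θ) v) 0 = v 0
    rw [rot_apply_zero, rot_apply_zero, rot_apply_one]
    simp only [Real.cos_neg, Real.sin_neg]
    linear_combination v 0 * Real.sin_sq_add_cos_sq θ
  · show rot θ (rot (-θ) v) 1 = v 1
    rw [rot_apply_one, rot_apply_zero, rot_apply_one]
    simp only [Real.cos_neg, Real.sin_neg]
    linear_combination v 1 * Real.sin_sq_add_cos_sq θ

lemma rot_neg_rot (θ : ℝ) (v : EuclideanSpace ℝ (Fin 2)) : rot (-θ) (rot θ v) = v := by
  ext i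
  fin_cases i
  · show rot (-θ) (rot θ v) 0 = v 0
    rw [rot_apply_zero, rot_apply_zero, rot_apply_one]
    simp only [Real.cos_neg, Real.sin_neg]
    linear_combination v 0 * Real.sin_sq_add_cos_sq θ
  · show rot (-θ) (rot θ v) 1 = v 1
    rw [rot_apply_one, rot_apply_zero, rot_apply_one]
    simp only [Real.cos_neg, Real.sin_neg]
    linear_combination v 1 * Real.sin_sq_add_cos_sq θ

lemma norm_rot (θ : ℝ) (x : EuclideanSpace ℝ (Fin 2)) : ‖rot θ x‖ = ‖x‖ := by
  rw [EuclideanSpace.norm_eq, EuclideanSpace.norm_eq]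
  congr 1
  rw [Fin.sum_univ_two, Fin.sum_univ_two, rot_apply_zero, rot_apply_one]
  simp only [Real.norm_eq_abs, sq_abs]
  linear_combination (x 0 ^ 2 + x 1 ^ 2) * Real.sin_sq_add_cos_sq θ

lemma cont_rot (θ : ℝ) : Continuous (rot θ) := by
  have h0 : Continuous fun x : EuclideanSpace ℝ (Fin 2) => x 0 :=
    (EuclideanSpace.proj (0 : Fin 2)).continuous
  have h1 : Continuous fun x : EuclideanSpace ℝ (Fin 2) => x 1 :=
    (EuclideanSpace.proj (1 : Fin 2)).continuous
  refine (PiLp.continuous_toLp 2 _).comp (continuous_pi fun i => ?_)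
  fin_cases i <;> simp [rot] <;> fun_prop

lemma mem_copy_iff (θ : ℝ) (h y : EuclideanSpace ℝ (Fin 2)) (S : Set (EuclideanSpace ℝ (Fin 2))) :
    y ∈ (fun x => h + rot θ x) '' S ↔ rot (-θ) (y - h) ∈ S := by
  constructor
  · rintro ⟨x, hx, rfl⟩
    rwa [add_sub_cancel_left, rot_neg_rot]
  · intro hx
    refine ⟨rot (-θ) (y - h), hx, ?_⟩
    show h + rot θ (rot (-θ) (y - h)) = y
    rw [rot_rot_neg]; abel

/-- display (8) of the paper.
If `S₀ ⊆ ℝ²` is nonempty and compact with connected complement, and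
`interior Ω_c ∖ S₀ ≠ ∅`, then the set of admissible positions
`𝒬 = {(h, ϑ) : interior Ω_c ∖ ((h + R(ϑ)S₀) ∪ S₀) ≠ ∅}` is nonempty and path-connected. -/
theorem stmt6 (S₀ Ωc : Set (EuclideanSpace ℝ (Fin 2)))
    (hS : S₀.Nonempty) (hSc : IsCompact S₀) (hconn : IsConnected S₀ᶜ)
    (hΩ : (interior Ωc \ S₀).Nonempty) :
    ({q : EuclideanSpace ℝ (Fin 2) × ℝ |
        (interior Ωc \ (((fun x => q.1 + rot q.2 x) '' S₀) ∪ S₀)).Nonempty}).Nonempty ∧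
    IsPathConnected {q : EuclideanSpace ℝ (Fin 2) × ℝ |
        (interior Ωc \ (((fun x => q.1 + rot q.2 x) '' S₀) ∪ S₀)).Nonempty} := by
  classical
  set Q : Set (EuclideanSpace ℝ (Fin 2) × ℝ) := {q : EuclideanSpace ℝ (Fin 2) × ℝ |
      (interior Ωc \ (((fun x => q.1 + rot q.2 x) '' S₀) ∪ S₀)).Nonempty} with hQdef
  obtain ⟨y₀, hy₀Ω, hy₀S⟩ := hΩ
  obtain ⟨C₀, hC₀⟩ := hSc.isBounded.exists_norm_le
  set C := max C₀ 0 with hCdef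
  have hC : ∀ x ∈ S₀, ‖x‖ ≤ C := fun x hx => le_max_of_le_left (hC₀ x hx)
  have hC0 : (0 : ℝ) ≤ C := le_max_right _ _
  -- far-away positions avoid any point of bounded norm
  have far : ∀ (y h : EuclideanSpace ℝ (Fin 2)) (θ : ℝ), ‖y‖ + C < ‖h‖ →
      y ∉ (fun x => h + rot θ x) '' S₀ := by
    rintro y h θ hlt ⟨x, hx, hyx⟩
    have h1 : h = y - rot θ x := eq_sub_of_add_eq hyx
    have h2 : ‖h‖ ≤ ‖y‖ + ‖rot θ x‖ := h1 ▸ norm_sub_le y (rot θ x)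
    rw [norm_rot] at h2
    linarith [hC x hx]
  -- the admissible translations for a fixed angle and witness form a path-connected set
  have key : ∀ (θ : ℝ) (y : EuclideanSpace ℝ (Fin 2)), IsPathConnected {h' : EuclideanSpace ℝ (Fin 2) | rot (-θ) (y - h') ∉ S₀} := by
    intro θ y
    have hcont : Continuous fun h' : EuclideanSpace ℝ (Fin 2) => rot (-θ) (y - h') :=
      (cont_rot (-θ)).comp (continuous_const.sub continuous_id)
    have hopen : IsOpen {h' : EuclideanSpace ℝ (Fin 2) | rot (-θ) (y - h') ∉ S₀} :=
      hSc.isClosed.isOpen_compl.preimage hcont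
    have himg : {h' : EuclideanSpace ℝ (Fin 2) | rot (-θ) (y - h') ∉ S₀} = (fun x => y - rot θ x) '' S₀ᶜ := by
      ext h'
      constructor
      · intro hh
        refine ⟨rot (-θ) (y - h'), hh, ?_⟩
        show y - rot θ (rot (-θ) (y - h')) = h'
        rw [rot_rot_neg]; abel
      · rintro ⟨x, hx, rfl⟩
        show rot (-θ) (y - (y - rot θ x)) ∉ S₀
        rwa [sub_sub_cancel, rot_neg_rot]
    have hconn' : IsConnected {h' : EuclideanSpace ℝ (Fin 2) | rot (-θ) (y - h') ∉ S₀} := by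
      rw [himg]
      exact hconn.image _ ((continuous_const.sub (cont_rot θ)).continuousOn)
    exact hopen.isConnected_iff_isPathConnected.mp hconn'
  -- lifting a path of translations (at fixed angle) to Q
  have lift : ∀ (θ₀ : ℝ) (y' a c : EuclideanSpace ℝ (Fin 2)), y' ∈ interior Ωc → y' ∉ S₀ →
      JoinedIn {h'' : EuclideanSpace ℝ (Fin 2) | rot (-θ₀) (y' - h'') ∉ S₀} a c →
      JoinedIn Q (a, θ₀) (c, θ₀) := by
    rintro θ₀ y' a c hy'Ω hy'S ⟨γ, hγ⟩
    refine ⟨γ.prod (Path.refl θ₀), fun t => ?_⟩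
    have hpt : (γ.prod (Path.refl θ₀)) t = (γ t, θ₀) := by simp [Path.prod_coe]
    rw [hpt]
    refine ⟨y', hy'Ω, fun hmem => ?_⟩
    rcases hmem with hmem | hmem
    · exact (hγ t) ((mem_copy_iff θ₀ (γ t) y' S₀).mp hmem)
    · exact hy'S hmem
  -- unit vector and base point
  set e : EuclideanSpace ℝ (Fin 2) := EuclideanSpace.single (0 : Fin 2) (1 : ℝ) with hedef
  have he : ‖e‖ = 1 := by rw [hedef, EuclideanSpace.norm_single]; norm_num
  set hb : EuclideanSpace ℝ (Fin 2) := (‖y₀‖ + C + 1) • e with hbdef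
  have hbnorm : ‖hb‖ = ‖y₀‖ + C + 1 := by
    rw [hbdef, norm_smul, he, mul_one, Real.norm_eq_abs, abs_of_nonneg]
    positivity
  have hbQ : ((hb, (0 : ℝ)) : EuclideanSpace ℝ (Fin 2) × ℝ) ∈ Q := by
    refine ⟨y₀, hy₀Ω, fun hmem => ?_⟩
    rcases hmem with hmem | hmem
    · exact far y₀ hb 0 (by rw [hbnorm]; linarith) hmem
    · exact hy₀S hmem
  refine ⟨⟨(hb, 0), hbQ⟩, ⟨(hb, 0), hbQ, ?_⟩⟩
  rintro ⟨h, θ⟩ hq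
  obtain ⟨y, hyΩ, hyn⟩ := hq
  have hy1 : y ∉ (fun x => h + rot θ x) '' S₀ := fun hm => hyn (Or.inl hm)
  have hy2 : y ∉ S₀ := fun hm => hyn (Or.inr hm)
  set s : ℝ := ‖y‖ + ‖y₀‖ + 2 * C + 1 with hsdef
  set h' : EuclideanSpace ℝ (Fin 2) := y - rot θ ((s + ‖y‖) • e) with hh'def
  have hxnorm : ‖(s + ‖y‖) • e‖ = s + ‖y‖ := by
    rw [norm_smul, he, mul_one, Real.norm_eq_abs, abs_of_nonneg]
    have := norm_nonneg y; have := norm_nonneg y₀; linarith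
  have hh'norm : s ≤ ‖h'‖ := by
    have h2 := norm_sub_norm_le (rot θ ((s + ‖y‖) • e)) y
    rw [norm_sub_rev] at h2
    rw [norm_rot, hxnorm] at h2
    rw [hh'def]
    linarith
  -- h' lies in the admissible set for (θ, y)
  have hh'A : h' ∈ {h'' : EuclideanSpace ℝ (Fin 2) | rot (-θ) (y - h'') ∉ S₀} := by
    show rot (-θ) (y - h') ∉ S₀
    rw [hh'def, sub_sub_cancel, rot_neg_rot]
    intro hmem
    have := hC _ hmem
    rw [hxnorm] at this
    have := norm_nonneg y; have := norm_nonneg y₀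
    linarith
  have hhA : h ∈ {h'' : EuclideanSpace ℝ (Fin 2) | rot (-θ) (y - h'') ∉ S₀} :=
    fun hm => hy1 ((mem_copy_iff θ h y S₀).mpr hm)
  -- h' and hb lie in the admissible set for (0, y₀)
  have hy₀y : ‖y₀‖ + C < s := by
    have := norm_nonneg y; linarith
  have hh'A₀ : h' ∈ {h'' : EuclideanSpace ℝ (Fin 2) | rot (-(0:ℝ)) (y₀ - h'') ∉ S₀} := by
    intro hm
    exact far y₀ h' 0 (lt_of_lt_of_le hy₀y hh'norm) ((mem_copy_iff 0 h' y₀ S₀).mpr hm)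
  have hbA₀ : hb ∈ {h'' : EuclideanSpace ℝ (Fin 2) | rot (-(0:ℝ)) (y₀ - h'') ∉ S₀} := by
    intro hm
    exact far y₀ hb 0 (by rw [hbnorm]; linarith) ((mem_copy_iff 0 hb y₀ S₀).mpr hm)
  -- the three path segments
  have seg1 : JoinedIn Q (hb, (0:ℝ)) (h', (0:ℝ)) :=
    lift 0 y₀ hb h' hy₀Ω hy₀S ((key 0 y₀).joinedIn hb hbA₀ h' hh'A₀)
  have seg3 : JoinedIn Q (h', θ) (h, θ) :=
    lift θ y h' h hyΩ hy2 ((key θ y).joinedIn h' hh'A h hhA)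
  let ρ : Path (0:ℝ) θ :=
    { toFun := fun t => (t : ℝ) * θ
      continuous_toFun := by fun_prop
      source' := by simp
      target' := by simp }
  have seg2 : JoinedIn Q (h', (0:ℝ)) (h', θ) := by
    refine ⟨(Path.refl h').prod ρ, fun t => ?_⟩
    have hpt : ((Path.refl h').prod ρ) t = (h', ρ t) := by
      simp [Path.prod_coe]
    rw [hpt]
    refine ⟨y₀, hy₀Ω, fun hmem => ?_⟩
    rcases hmem with hmem | hmem
    · exact far y₀ h' (ρ t) (lt_of_lt_of_le hy₀y hh'norm) hmem
    · exact hy₀S hmem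
  exact seg1.trans (seg2.trans seg3)
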